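/- Let S be a set and let w₁ and w₂ be closed words with letters in S, of lengths k₁ + 1 and k₂ + 1 respectively, whose edge sets satisfy E_{w₁} ∩ E_{w₂} ≠ ∅. Then there exists a closed word w₃ with letters in S of length k₁ + k₂ + 1 such that the multiset of undirected edges traversed by w₃ (with multiplicity) equals the multiset union of the edges traversed by w₁ and by w₂; in particular E_{w₃} = E_{w₁} ∪ E_{w₂}, and for any symmetric array (x_{α,β})_{α,β ∈ S} one has X_{w₃} = X_{w₁} · X_{w₂}. -/

import Mathlib

open Finset

/-- A word of length `k+1` with letters in `S`, encoded as `w : Fin (k+1) → S`, is closed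
if its first and last letters coincide. -/
def IsClosedWord {S : Type*} {k : ℕ} (w : Fin (k + 1) → S) : Prop :=
  w (Fin.last k) = w 0

/-- The multiset of undirected edges traversed (with multiplicity) by the word `w`:
the `j`-th traversed edge is `{w_j, w_{j+1}}`. -/
def wordEdges {S : Type*} {k : ℕ} (w : Fin (k + 1) → S) : Multiset (Sym2 S) :=
  (List.ofFn fun j : Fin k => s(w j.castSucc, w j.succ))

/-- The edge set `E_w` of the word `w`: the set of undirected edges it traverses. -/
def wordEdgeSet {S : Type*} {k : ℕ} (w : Fin (k + 1) → S) : Set (Sym2 S) :=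
  {e | ∃ j : Fin k, e = s(w j.castSucc, w j.succ)}

/-- For a symmetric array `x`, the value `X_w = ∏_{j=0}^{k-1} x_{w_j, w_{j+1}}`. -/
def wordVal {S : Type*} (x : S → S → ℝ) {k : ℕ} (w : Fin (k + 1) → S) : ℝ :=
  ∏ j : Fin k, x (w j.castSucc) (w j.succ)

/-!
A closed word with `n ≥ 1` edges is a cyclic sequence of letters, so it may be rotated to start
at any of its letters without changing the multiset of edges it traverses. Rotate both words to
start at an endpoint of the shared edge and concatenate them at that common letter: the edge
multisets add up. The edge set and, for symmetric `x`, the value `X_w` are functions of the edge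
multiset.
-/

section ClosedWords

variable {S : Type*}

section EdgeMultiset

variable {k k₁ k₂ : ℕ}

theorem mem_wordEdgeSet_iff {w : Fin (k + 1) → S} {e : Sym2 S} :
    e ∈ wordEdgeSet w ↔ e ∈ wordEdges w := by
  simp only [wordEdges, Multiset.mem_coe, List.mem_ofFn, wordEdgeSet, Set.mem_ofPred_eq, eq_comm]

theorem wordVal_eq_prod_map_wordEdges (x : S → S → ℝ) (hx : ∀ a b, x a b = x b a)
    (w : Fin (k + 1) → S) :
    wordVal x w = ((wordEdges w).map (Sym2.lift ⟨x, hx⟩)).prod := by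
  simp [wordVal, wordEdges, List.prod_ofFn]

variable {w : Fin (k + 1) → S} {w₁ : Fin (k₁ + 1) → S} {w₂ : Fin (k₂ + 1) → S}

theorem wordEdgeSet_eq_union_of_wordEdges_eq_add
    (h : wordEdges w = wordEdges w₁ + wordEdges w₂) :
    wordEdgeSet w = wordEdgeSet w₁ ∪ wordEdgeSet w₂ := by
  ext e
  simp only [Set.mem_union, mem_wordEdgeSet_iff, h, Multiset.mem_add]

theorem wordVal_eq_mul_of_wordEdges_eq_add (x : S → S → ℝ) (hx : ∀ a b, x a b = x b a)
    (h : wordEdges w = wordEdges w₁ + wordEdges w₂) :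
    wordVal x w = wordVal x w₁ * wordVal x w₂ := by
  simp only [wordVal_eq_prod_map_wordEdges x hx, h, Multiset.map_add, Multiset.prod_add]

end EdgeMultiset

section Append

variable {k₁ k₂ : ℕ}

/-- The word `u` followed by `v`, the last letter of `u` being dropped: when it equals `v 0`,
this is the concatenation of the two paths. -/
def wordAppend (u : Fin (k₁ + 1) → S) (v : Fin (k₂ + 1) → S) : Fin (k₁ + k₂ + 1) → S :=
  Fin.append (m := k₁) (n := k₂ + 1) (Fin.init u) v

theorem wordAppend_castAdd (u : Fin (k₁ + 1) → S) (v : Fin (k₂ + 1) → S) (i : Fin k₁) :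
    wordAppend u v (Fin.castAdd (k₂ + 1) i) = u i.castSucc :=
  Fin.append_left _ _ _

theorem wordAppend_natAdd (u : Fin (k₁ + 1) → S) (v : Fin (k₂ + 1) → S) (i : Fin (k₂ + 1)) :
    wordAppend u v (Fin.natAdd k₁ i) = v i :=
  Fin.append_right _ _ _

theorem wordAppend_castAdd_succ {u : Fin (k₁ + 1) → S} {v : Fin (k₂ + 1) → S}
    (h : u (Fin.last k₁) = v 0) (i : Fin k₁) :
    wordAppend u v (Fin.castAdd k₂ i).succ = u i.succ := by
  rcases Fin.eq_castSucc_or_eq_last i.succ with ⟨j, hj⟩ | hj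
  · rw [hj, ← wordAppend_castAdd u v j]
    congr 1
    ext
    simpa [Fin.ext_iff] using hj
  · rw [hj, h, ← wordAppend_natAdd u v 0]
    congr 1
    ext
    simpa [Fin.ext_iff] using hj

theorem wordEdges_wordAppend {u : Fin (k₁ + 1) → S} {v : Fin (k₂ + 1) → S}
    (h : u (Fin.last k₁) = v 0) :
    wordEdges (wordAppend u v) = wordEdges u + wordEdges v := by
  rw [wordEdges, List.ofFn_add]
  simp only [wordEdges, Multiset.coe_add]
  congr 3 <;> funext i
  · rw [← wordAppend_castAdd u v i, ← wordAppend_castAdd_succ h i]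
    rfl
  · rw [Fin.succ_natAdd, ← Fin.natAdd_castSucc, wordAppend_natAdd, wordAppend_natAdd]

theorem isClosedWord_wordAppend {u : Fin (k₁ + 1) → S} {v : Fin (k₂ + 1) → S}
    (hv : IsClosedWord v) (h : u 0 = v 0) : IsClosedWord (wordAppend u v) := by
  have hzero : wordAppend u v 0 = u 0 := by
    cases k₁ with
    | zero => exact (wordAppend_natAdd u v 0).trans h.symm
    | succ k => exact wordAppend_castAdd u v 0
  rw [IsClosedWord, ← Fin.natAdd_last, wordAppend_natAdd, hv, hzero, h]

end Append

section Rotate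

open Fin.NatCast

variable {n : ℕ} [NeZero n]

theorem IsClosedWord.apply_succ {w : Fin (n + 1) → S} (hw : IsClosedWord w) (i : Fin n) :
    w i.succ = w (i + 1).castSucc := by
  rcases (show i.val + 1 < n ∨ i.val + 1 = n by omega) with h | h
  · congr 1
    ext
    simp [Fin.val_add_one_of_lt' h]
  · have hlast : i.succ = Fin.last n := Fin.ext (by simp [h])
    have hzero : i + 1 = 0 := Fin.ext (by simp [Fin.val_add, h])
    rw [hlast, hzero, hw]
    rfl

theorem IsClosedWord.exists_castSucc_eq_of_mem {w : Fin (n + 1) → S} (hw : IsClosedWord w)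
    {e : Sym2 S} (he : e ∈ wordEdgeSet w) {v : S} (hv : v ∈ e) :
    ∃ i : Fin n, w i.castSucc = v := by
  obtain ⟨j, rfl⟩ := he
  rcases Sym2.mem_iff.1 hv with rfl | rfl
  · exact ⟨j, rfl⟩
  · exact ⟨j + 1, (hw.apply_succ j).symm⟩

theorem IsClosedWord.wordEdges_eq_map_univ {w : Fin (n + 1) → S} (hw : IsClosedWord w) :
    wordEdges w = Finset.univ.val.map fun i : Fin n => s(w i.castSucc, w (i + 1).castSucc) := by
  simp [wordEdges, hw.apply_succ]

/-- `w` started at its `r`-th letter, indices being read modulo the number `n` of edges. -/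
def rotateWord (w : Fin (n + 1) → S) (r : Fin n) : Fin (n + 1) → S :=
  fun j => w (((j : ℕ) : Fin n) + r).castSucc

theorem rotateWord_zero (w : Fin (n + 1) → S) (r : Fin n) :
    rotateWord w r 0 = w r.castSucc := by
  simp [rotateWord]

theorem isClosedWord_rotateWord (w : Fin (n + 1) → S) (r : Fin n) :
    IsClosedWord (rotateWord w r) := by
  simp [IsClosedWord, rotateWord]

theorem IsClosedWord.wordEdges_rotateWord {w : Fin (n + 1) → S} (hw : IsClosedWord w)
    (r : Fin n) : wordEdges (rotateWord w r) = wordEdges w := by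
  calc wordEdges (rotateWord w r)
      = (Finset.univ.val.map (Equiv.addRight r)).map
          fun i : Fin n => s(w i.castSucc, w (i + 1).castSucc) := by
        rw [(isClosedWord_rotateWord w r).wordEdges_eq_map_univ, Multiset.map_map]
        congr 1
        funext i
        simp [rotateWord, add_right_comm]
    _ = wordEdges w := by rw [Multiset.map_univ_val_equiv, hw.wordEdges_eq_map_univ]

end Rotate

end ClosedWords


/-- (Gluing of two closed words sharing an edge.) If `w₁` and `w₂` are
closed words with letters in `S` of lengths `k₁+1` and `k₂+1` whose edge sets intersect,
then there is a closed word `w₃` of length `k₁+k₂+1` whose multiset of traversed edges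
(with multiplicity) is the multiset union of those of `w₁` and `w₂`; in particular
`E_{w₃} = E_{w₁} ∪ E_{w₂}` and `X_{w₃} = X_{w₁} · X_{w₂}` for every symmetric array `x`. -/
theorem closed_words_sharing_edge_glue {S : Type*} {k₁ k₂ : ℕ}
    (w₁ : Fin (k₁ + 1) → S) (w₂ : Fin (k₂ + 1) → S)
    (h₁ : IsClosedWord w₁) (h₂ : IsClosedWord w₂)
    (hshare : (wordEdgeSet w₁ ∩ wordEdgeSet w₂).Nonempty) :
    ∃ w₃ : Fin (k₁ + k₂ + 1) → S,
      IsClosedWord w₃ ∧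
      wordEdges w₃ = wordEdges w₁ + wordEdges w₂ ∧
      wordEdgeSet w₃ = wordEdgeSet w₁ ∪ wordEdgeSet w₂ ∧
      ∀ x : S → S → ℝ, (∀ a b, x a b = x b a) →
        wordVal x w₃ = wordVal x w₁ * wordVal x w₂ := by
  obtain ⟨e, ⟨j₁, rfl⟩, he₂⟩ := hshare
  have : NeZero k₁ := ⟨j₁.pos.ne'⟩
  have : NeZero k₂ := let ⟨j₂, _⟩ := he₂; ⟨j₂.pos.ne'⟩
  obtain ⟨r₂, hr₂⟩ := h₂.exists_castSucc_eq_of_mem he₂ (Sym2.mem_mk_left _ _)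
  have hbase : rotateWord w₁ j₁ 0 = rotateWord w₂ r₂ 0 := by
    rw [rotateWord_zero, rotateWord_zero, hr₂]
  have hedges : wordEdges (wordAppend (rotateWord w₁ j₁) (rotateWord w₂ r₂)) =
      wordEdges w₁ + wordEdges w₂ := by
    rw [wordEdges_wordAppend ((isClosedWord_rotateWord w₁ j₁).trans hbase),
      h₁.wordEdges_rotateWord, h₂.wordEdges_rotateWord]
  exact ⟨_, isClosedWord_wordAppend (isClosedWord_rotateWord w₂ r₂) hbase, hedges,
    wordEdgeSet_eq_union_of_wordEdges_eq_add hedges,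
    fun x hx => wordVal_eq_mul_of_wordEdges_eq_add x hx hedges⟩
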